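/- arXiv:1312.5254 — 3 statements merged into one kernel-verified Lean document; each statement's English description precedes it below -/
import Mathlib

section
/- Let k, n ∈ ℕ with n ≥ 1, let ζ ∈ ℂ be a primitive n-th root of unity, and let ñ = n if n is odd and ñ = n/2 if n is even. Then the ℂ-dimension (Module.finrank) of the centralizer subalgebra {X : Matrix I_k I_k ℂ | X·D(k,ζ) = D(k,ζ)·X} equals Σ_{0 ≤ a ≤ k} Σ_{0 ≤ b ≤ k, a ≡ b (mod ñ)} C(k,a)·C(k,b), where C(k,a) denotes the binomial coefficient. -/
/-!
`Dmat k ζ` is diagonal, so a matrix commutes with it exactly when it vanishes off the pairs of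
indices `(r, s)` with equal diagonal entries; the centralizer is the space of functions on those
pairs. The entries `ζ ^ (k - 2|r|)` and `ζ ^ (k - 2|s|)` agree iff `(ζ²)^|r| = (ζ²)^|s|`, and `ζ²`
has order `n / gcd(n, 2) = ñ`. Counting pairs by their weights `(a, b)`, with `C(k, a)` indices of
weight `a`, gives the double sum.
-/

open Matrix

/-- The number of `-1` factors (encoded as `true`) in a simple tensor index. -/
def wt {k : ℕ} (r : Fin k → Bool) : ℕ := (Finset.univ.filter fun i => r i = true).card

/-- The matrix of `g^{⊗k}` on `V^{⊗k}` for `g = diag(ζ⁻¹, ζ)`. -/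
noncomputable def Dmat (k : ℕ) (ζ : ℂ) : Matrix (Fin k → Bool) (Fin k → Bool) ℂ :=
  Matrix.diagonal fun r => ζ ^ ((k : ℤ) - 2 * (wt r : ℤ))

/-- `ñ = n` if `n` is odd, `n/2` if `n` is even. -/
def ntil (n : ℕ) : ℕ := if n % 2 = 0 then n / 2 else n

/-- The centralizer of a matrix `M`, as a submodule of the matrix algebra. -/
noncomputable def commSub {I : Type*} [Fintype I] [DecidableEq I] (M : Matrix I I ℂ) :
    Submodule ℂ (Matrix I I ℂ) where
  carrier := {X | X * M = M * X}
  add_mem' := by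
    intro a b ha hb
    simp only [Set.mem_setOf_eq] at *
    rw [add_mul, mul_add, ha, hb]
  zero_mem' := by simp
  smul_mem' := by
    intro c X hX
    simp only [Set.mem_setOf_eq] at *
    rw [smul_mul_assoc, mul_smul_comm, hX]

open Finset

section Centralizer

variable {I : Type*} [Fintype I] [DecidableEq I]

lemma mem_commSub_diagonal_iff (d : I → ℂ) (X : Matrix I I ℂ) :
    X ∈ commSub (diagonal d) ↔ ∀ r s, d r ≠ d s → X r s = 0 := by
  change X * diagonal d = diagonal d * X ↔ _
  constructor
  · intro h r s hds
    have hrs := congrFun (congrFun h r) s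
    rw [mul_diagonal, diagonal_mul] at hrs
    have hprod : (d r - d s) * X r s = 0 := by linear_combination -hrs
    exact (mul_eq_zero.mp hprod).resolve_left (sub_ne_zero.mpr hds)
  · intro h
    ext r s
    rw [mul_diagonal, diagonal_mul]
    by_cases hds : d r = d s
    · rw [hds, mul_comm]
    · rw [h r s hds, mul_zero, zero_mul]

noncomputable def commSubDiagonalEquiv (d : I → ℂ) :
    commSub (diagonal d) ≃ₗ[ℂ] ({p : I × I // d p.1 = d p.2} → ℂ) where
  toFun X p := X.1 p.1.1 p.1.2
  map_add' _ _ := rfl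
  map_smul' _ _ := rfl
  invFun f := ⟨Matrix.of fun r s => if h : d r = d s then f ⟨(r, s), h⟩ else 0,
    (mem_commSub_diagonal_iff d _).mpr fun r s hds => by simp [hds]⟩
  left_inv X := by
    ext r s
    by_cases hds : d r = d s
    · simp [hds]
    · simp [hds, (mem_commSub_diagonal_iff d X.1).mp X.2 r s hds]
  right_inv f := by
    ext p
    simp [p.2]

lemma finrank_commSub_diagonal (d : I → ℂ) :
    Module.finrank ℂ (commSub (diagonal d)) = #{p : I × I | d p.1 = d p.2} := by
  rw [(commSubDiagonalEquiv d).finrank_eq, Module.finrank_pi, Fintype.card_subtype]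

end Centralizer

lemma sum_wt_eq_sum_choose {M : Type*} [AddCommMonoid M] (k : ℕ) (f : ℕ → M) :
    ∑ r : Fin k → Bool, f (wt r) = ∑ a ∈ range (k + 1), k.choose a • f a := by
  have hpowerset := sum_powerset_apply_card f (x := (univ : Finset (Fin k)))
  rw [card_univ, Fintype.card_fin, powerset_univ] at hpowerset
  rw [← hpowerset]
  exact sum_nbij' (fun r => univ.filter (r · = true)) (fun s i => decide (i ∈ s))
    (by simp) (by simp) (fun r _ => by ext; simp) (fun s _ => by ext; simp) (fun r _ => rfl)

lemma card_wt_modEq (k m : ℕ) :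
    #{p : (Fin k → Bool) × (Fin k → Bool) | wt p.1 ≡ wt p.2 [MOD m]} =
      ∑ a ∈ range (k + 1), ∑ b ∈ range (k + 1),
        if a ≡ b [MOD m] then k.choose a * k.choose b else 0 := by
  rw [card_filter, Fintype.sum_prod_type]
  rw [sum_wt_eq_sum_choose k fun a => ∑ s, if a ≡ wt s [MOD m] then 1 else 0]
  refine sum_congr rfl fun a _ => ?_
  rw [sum_wt_eq_sum_choose k fun b => if a ≡ b [MOD m] then 1 else 0, smul_sum]
  refine sum_congr rfl fun b _ => ?_
  split_ifs <;> simp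

lemma ntil_eq_div_gcd_two (n : ℕ) : ntil n = n / n.gcd 2 := by
  rcases Nat.even_or_odd n with hn | hn
  · rw [ntil, if_pos (Nat.even_iff.mp hn), Nat.gcd_eq_right (even_iff_two_dvd.mp hn)]
  · have hmod := Nat.odd_iff.mp hn
    rw [ntil, if_neg (by omega), (Nat.coprime_two_right.mpr hn).gcd_eq_one, Nat.div_one]

lemma IsPrimitiveRoot.orderOf_sq {M : Type*} [CommMonoid M] {ζ : M} {n : ℕ}
    (hζ : IsPrimitiveRoot ζ n) :
    orderOf (ζ ^ 2) = ntil n := by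
  rw [orderOf_pow' _ two_ne_zero, ← hζ.eq_orderOf, ntil_eq_div_gcd_two]

lemma zpow_sub_two_mul_eq_iff {G : Type*} [CommGroupWithZero G] {ζ : G} (hζ : ζ ≠ 0)
    (k : ℤ) (a b : ℕ) :
    ζ ^ (k - 2 * (a : ℤ)) = ζ ^ (k - 2 * (b : ℤ)) ↔ (ζ ^ 2) ^ a = (ζ ^ 2) ^ b := by
  have hsplit (c : ℕ) : ζ ^ (k - 2 * (c : ℤ)) = ζ ^ k * ((ζ ^ 2) ^ c)⁻¹ := by
    rw [zpow_sub₀ hζ, div_eq_mul_inv, _root_.zpow_mul, zpow_natCast, zpow_ofNat]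
  rw [hsplit, hsplit, mul_right_inj' (zpow_ne_zero k hζ), _root_.inv_inj]

theorem stmt1 (k n : ℕ) (hn : 1 ≤ n) (ζ : ℂ) (hζ : IsPrimitiveRoot ζ n) :
    Module.finrank ℂ (commSub (Dmat k ζ)) =
      ∑ a ∈ Finset.range (k + 1), ∑ b ∈ Finset.range (k + 1),
        if a ≡ b [MOD ntil n] then k.choose a * k.choose b else 0 := by
  have hn0 : n ≠ 0 := Nat.one_le_iff_ne_zero.mp hn
  rw [Dmat, finrank_commSub_diagonal, ← card_wt_modEq, ← hζ.orderOf_sq]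
  congr 1
  refine filter_congr fun p _ => ?_
  rw [zpow_sub_two_mul_eq_iff (hζ.ne_zero hn0), ((hζ.isOfFinOrder hn0).pow).pow_eq_pow_iff_modEq]
end

section
/- Let k ∈ ℕ and let ζ ∈ ℂ, ζ ≠ 0, be such that ζ is not a root of unity (ζ^m ≠ 1 for every m ≥ 1). Then: (i) a matrix X : Matrix I_k I_k ℂ commutes with D(k,ζ) if and only if X r s = 0 for all r, s : I_k with |r| ≠ |s|; and (ii) the ℂ-dimension of the centralizer subalgebra {X | X·D(k,ζ) = D(k,ζ)·X} equals the central binomial coefficient C(2k, k). -/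
open Matrix

lemma zpow_inj_aux (ζ : ℂ) (hζ0 : ζ ≠ 0) (hζ : ∀ m : ℕ, 1 ≤ m → ζ ^ m ≠ 1)
    {a b : ℤ} (h : ζ ^ a = ζ ^ b) : a = b := by
  by_contra hne
  wlog hab : a < b generalizing a b
  · exact this h.symm (Ne.symm hne) (by omega)
  have h1 : ζ ^ (b - a) = 1 := by
    rw [zpow_sub₀ hζ0, h, div_self (zpow_ne_zero _ hζ0)]
  have h2 : ζ ^ ((b - a).toNat) = 1 := by
    have : ((b - a).toNat : ℤ) = b - a := Int.toNat_of_nonneg (by omega)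
    rw [← zpow_natCast, this, h1]
  exact hζ _ (by omega) h2

lemma card_wt_eq (k w : ℕ) :
    (Finset.univ.filter fun r : Fin k → Bool => wt r = w).card = k.choose w := by
  classical
  have e : {r : Fin k → Bool // wt r = w} ≃ {s : Finset (Fin k) // s.card = w} :=
    { toFun := fun r => ⟨Finset.univ.filter fun i => r.1 i = true, r.2⟩
      invFun := fun s => ⟨fun i => decide (i ∈ s.1), by
        simpa [wt] using s.2⟩
      left_inv := by
        rintro ⟨r, hr⟩
        ext i
        simp
      right_inv := by
        rintro ⟨s, hs⟩
        ext i
        simp }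
  rw [← Fintype.card_subtype, Fintype.card_congr e, Fintype.card_finset_len,
    Fintype.card_fin]

lemma wt_le {k : ℕ} (r : Fin k → Bool) : wt r ≤ k := by
  simpa [wt] using (Finset.card_filter_le Finset.univ fun i => r i = true).trans
    (le_of_eq (by simp))

lemma card_pairs (k : ℕ) :
    Fintype.card {p : (Fin k → Bool) × (Fin k → Bool) // wt p.1 = wt p.2} =
      (2 * k).choose k := by
  classical
  rw [Fintype.card_subtype]
  have h1 : (Finset.univ.filter fun p : (Fin k → Bool) × (Fin k → Bool) =>
      wt p.1 = wt p.2).card = ∑ r : Fin k → Bool, k.choose (wt r) := by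
    rw [Finset.card_filter]
    rw [← Finset.univ_product_univ, Finset.sum_product]
    refine Finset.sum_congr rfl fun r _ => ?_
    have : (∑ s : Fin k → Bool, if wt r = wt s then (1:ℕ) else 0) =
        (Finset.univ.filter fun s : Fin k → Bool => wt s = wt r).card := by
      rw [Finset.card_filter]
      exact Finset.sum_congr rfl fun s _ => by by_cases h : wt r = wt s <;> simp [h, eq_comm]
    rw [this, card_wt_eq]
  rw [h1]
  have h2 : (∑ r : Fin k → Bool, k.choose (wt r)) =
      ∑ w ∈ Finset.range (k + 1), k.choose w * k.choose w := by
    rw [← Finset.sum_fiberwise_of_maps_to (g := wt)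
      (fun r _ => Finset.mem_range.mpr (Nat.lt_succ_of_le (wt_le r)))
      (fun r => k.choose (wt r))]
    refine Finset.sum_congr rfl fun w _ => ?_
    rw [Finset.sum_congr rfl (fun r hr => by
      rw [(Finset.mem_filter.mp hr).2]), Finset.sum_const, card_wt_eq, smul_eq_mul]
  rw [h2, two_mul, Nat.add_choose_eq,
    Finset.Nat.sum_antidiagonal_eq_sum_range_succ_mk]
  refine Finset.sum_congr rfl fun i hi => ?_
  have hik : i ≤ k := Nat.lt_succ_iff.mp (Finset.mem_range.mp hi)
  rw [Nat.choose_symm hik]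

/-- For `ζ` not a root of unity (the group `C_∞`): a matrix commutes with `D(k,ζ)` iff it
is supported on pairs with `|r| = |s|`, and the centralizer `Z_k(C_∞)` has dimension
`C(2k,k)`. -/
theorem stmt6 (k : ℕ) (ζ : ℂ) (hζ0 : ζ ≠ 0) (hζ : ∀ m : ℕ, 1 ≤ m → ζ ^ m ≠ 1) :
    (∀ X : Matrix (Fin k → Bool) (Fin k → Bool) ℂ,
      X * Dmat k ζ = Dmat k ζ * X ↔
        ∀ r s : Fin k → Bool, wt r ≠ wt s → X r s = 0) ∧
    Module.finrank ℂ (commSub (Dmat k ζ)) = (2 * k).choose k := by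
  classical
  have dinj : ∀ r s : Fin k → Bool,
      ζ ^ ((k : ℤ) - 2 * (wt r : ℤ)) = ζ ^ ((k : ℤ) - 2 * (wt s : ℤ)) → wt r = wt s := by
    intro r s h
    have := zpow_inj_aux ζ hζ0 hζ h
    omega
  have key : ∀ X : Matrix (Fin k → Bool) (Fin k → Bool) ℂ,
      X * Dmat k ζ = Dmat k ζ * X ↔
        ∀ r s : Fin k → Bool, wt r ≠ wt s → X r s = 0 := by
    intro X
    constructor
    · intro h r s hrs
      have := congrFun (congrFun h r) s
      rw [Dmat, Matrix.mul_diagonal, Matrix.diagonal_mul] at this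
      by_contra hX
      have h2 : X r s * ζ ^ ((k : ℤ) - 2 * (wt s : ℤ)) =
          X r s * ζ ^ ((k : ℤ) - 2 * (wt r : ℤ)) := by rw [this, mul_comm]
      exact hrs (dinj r s (mul_left_cancel₀ hX h2).symm)
    · intro h
      ext r s
      rw [Dmat, Matrix.mul_diagonal, Matrix.diagonal_mul]
      by_cases hrs : wt r = wt s
      · rw [hrs, mul_comm]
      · rw [h r s hrs, mul_zero, zero_mul]
  refine ⟨key, ?_⟩
  let e : commSub (Dmat k ζ) ≃ₗ[ℂ]
      ({p : (Fin k → Bool) × (Fin k → Bool) // wt p.1 = wt p.2} → ℂ) :=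
    { toFun := fun X p => X.1 p.1.1 p.1.2
      map_add' := fun X Y => rfl
      map_smul' := fun c X => rfl
      invFun := fun f => ⟨Matrix.of fun r s =>
          if h : wt r = wt s then f ⟨(r, s), h⟩ else 0, by
        refine (key _).mpr fun r s hrs => ?_
        simp [Matrix.of_apply, hrs]⟩
      left_inv := by
        rintro ⟨X, hX⟩
        ext r s
        by_cases h : wt r = wt s
        · simp [Matrix.of_apply, h]
        · simp [Matrix.of_apply, h, (key X).mp hX r s h]
      right_inv := by
        intro f
        ext ⟨⟨r, s⟩, h⟩
        simp [Matrix.of_apply, h] }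
  rw [e.finrank_eq, Module.finrank_pi, card_pairs]
end

section
/- Let k ≥ 1, let n ≥ 2, let ζ ∈ ℂ be a primitive (2n)-th root of unity, let ℓ ∈ {0, n}, and let ε ∈ {1, −1}. Let W be the subspace {v : I_k → ℂ | D(k,ζ).mulVec v = ζ^ℓ • v and P_k.mulVec v = (ε · i^((ℓ : ℤ) − k)) • v} (i = Complex.I, integer power). Then 2 · (the ℂ-dimension of W) = Σ_{0 ≤ b ≤ k, (k : ℤ) − 2b ≡ ℓ (mod 2n)} C(k,b). (For ε = 1 and ε = −1 these are the dimensions of the irreducible Z_k(D_n)-modules Z_k^{(ℓ)} and Z_k^{(ℓ′)} labeled by the one-dimensional D_n-modules D_n^{(ℓ)} and D_n^{(ℓ′)}, each equal to half the corresponding D(k,ζ)-eigenspace dimension.) -/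
open Matrix

/-- The sign-reversal `-r` of an index, `(−r) i = ¬ (r i)`. -/
def negt {k : ℕ} (r : Fin k → Bool) : Fin k → Bool := fun i => !(r i)

/-- The 0–1 matrix with `P r s = 1` iff `s = −r`. -/
noncomputable def Pmat (k : ℕ) : Matrix (Fin k → Bool) (Fin k → Bool) ℂ :=
  Matrix.of fun r s => if s = negt r then 1 else 0

/-- The eigenspace `{v | M.mulVec v = μ • v}` as a submodule of `I → ℂ`. -/
noncomputable def eigSub {I : Type*} [Fintype I] (M : Matrix I I ℂ) (μ : ℂ) :
    Submodule ℂ (I → ℂ) where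
  carrier := {v | M.mulVec v = μ • v}
  add_mem' := by
    intro a b ha hb
    simp only [Set.mem_setOf_eq] at *
    rw [Matrix.mulVec_add, ha, hb, smul_add]
  zero_mem' := by
    simp only [Set.mem_setOf_eq, Matrix.mulVec_zero, smul_zero]
  smul_mem' := by
    intro c v hv
    simp only [Set.mem_setOf_eq] at *
    rw [Matrix.mulVec_smul, hv, smul_comm]

/-!
The basis vector `e_r` is a `D(k,ζ)`-eigenvector with eigenvalue `ζ ^ (k - 2|r|)`, so `v ∈ W` iff
`v` is supported on `S = {r | k - 2|r| ≡ ℓ [ZMOD 2n]}` and `v (−r) = μ • v r`, `μ = ε i^(ℓ-k)`.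
Since `2ℓ ≡ 0 [ZMOD 2n]`, `S` is stable under the fixed-point-free involution `r ↦ −r`, and if
`S ≠ ∅` then `ℓ - k` is even, so `μ² = 1`. Hence `v` is determined by its values on
`{r ∈ S | r 0 = false}`, which may be chosen freely, and this set has half the size of `S`.
-/

open Finset

lemma IsPrimitiveRoot.zpow_eq_zpow_iff_modEq {G₀ : Type*} [CommGroupWithZero G₀] {ζ : G₀}
    {m : ℕ} (hζ : IsPrimitiveRoot ζ m) (hm : m ≠ 0) (a b : ℤ) :
    ζ ^ a = ζ ^ b ↔ a ≡ b [ZMOD m] := by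
  have hζ0 : ζ ≠ 0 := hζ.ne_zero hm
  rw [Int.modEq_iff_dvd, ← hζ.zpow_eq_one_iff_dvd, zpow_sub₀ hζ0,
    div_eq_one_iff_eq (zpow_ne_zero _ hζ0), eq_comm]

lemma Int.neg_modEq_iff_of_dvd_two_mul {m a b : ℤ} (hb : m ∣ 2 * b) :
    -a ≡ b [ZMOD m] ↔ a ≡ b [ZMOD m] := by
  simp only [Int.modEq_iff_dvd]
  constructor <;> intro h <;> have := dvd_sub hb h
  · rwa [show 2 * b - (b - -a) = b - a by ring] at this
  · rwa [show 2 * b - (b - a) = b - -a by ring] at this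

section Involution

variable {K I : Type*} [Field K] [Fintype I] {σ : I → I} {p q : I → Prop}
  [DecidablePred p] [DecidablePred q]

lemma two_mul_card_filter_and (hσ : Function.Involutive σ) (hp : ∀ r, p (σ r) ↔ p r)
    (hq : ∀ r, q (σ r) ↔ ¬ q r) : 2 * #{r | p r ∧ q r} = #{r | p r} := by
  rw [← card_filter_add_card_filter_not (s := {r | p r}) (p := q), filter_filter,
    filter_filter, two_mul]
  congr 1
  refine card_nbij' σ σ ?_ ?_ (fun r _ => hσ r) (fun r _ => hσ r) <;>
    · intro r hr
      simp only [coe_filter, mem_univ, true_and, Set.mem_ofPred_eq] at hr ⊢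
      have := hq (σ r)
      rw [hσ] at this
      exact ⟨(hp r).mpr hr.1, by tauto⟩

lemma finrank_eq_card_filter_and (hσ : Function.Involutive σ) (hp : ∀ r, p (σ r) ↔ p r)
    (hq : ∀ r, q (σ r) ↔ ¬ q r) {μ : K} (hμ : ∀ r, p r → μ ^ 2 = 1) {W : Submodule K (I → K)}
    (hW : ∀ v, v ∈ W ↔ (∀ r, ¬ p r → v r = 0) ∧ ∀ r, v (σ r) = μ * v r) :
    Module.finrank K W = #{r | p r ∧ q r} := by
  let restrict : W →ₗ[K] ({r // p r ∧ q r} → K) :=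
    (LinearMap.funLeft K K Subtype.val).comp W.subtype
  have hinj : Function.Injective restrict := by
    rw [← LinearMap.ker_eq_bot, LinearMap.ker_eq_bot']
    rintro ⟨v, hv⟩ hres
    obtain ⟨hsupp, hinv⟩ := (hW v).mp hv
    have hT : ∀ r, p r → q r → v r = 0 := fun r hpr hqr => congrFun hres ⟨r, hpr, hqr⟩
    ext r
    change v r = 0
    by_cases hpr : p r
    · by_cases hqr : q r
      · exact hT r hpr hqr
      · rw [← hσ r, hinv, hT _ ((hp r).mpr hpr) ((hq r).mpr hqr), mul_zero]
    · exact hsupp r hpr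
  have hsurj : Function.Surjective restrict := by
    intro f
    let g : I → K := fun r => if h : p r ∧ q r then f ⟨r, h⟩ else 0
    have hg : ∀ r, ¬ p r → g r = 0 := fun r hpr => dif_neg fun h => hpr h.1
    let v : I → K := fun r => if q r then g r else μ * g (σ r)
    have hv : v ∈ W := by
      refine (hW v).mpr ⟨fun r hpr => ?_, fun r => ?_⟩
      · by_cases hqr : q r
        · simp [v, hqr, hg r hpr]
        · simp [v, hqr, hg (σ r) (by rwa [hp])]
      · by_cases hqr : q r
        · have hqσ : ¬ q (σ r) := fun h => (hq r).mp h hqr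
          simp [v, hqr, hqσ, hσ r]
        · have hqσ : q (σ r) := by rw [hq]; exact hqr
          by_cases hpr : p r
          · simp [v, hqr, hqσ, ← mul_assoc, ← sq, hμ r hpr]
          · simp [v, hqr, hqσ, hg (σ r) (by rwa [hp])]
    refine ⟨⟨v, hv⟩, funext fun t => ?_⟩
    simp [restrict, v, g, t.2.2, t.2]
  rw [(LinearEquiv.ofBijective restrict ⟨hinj, hsurj⟩).finrank_eq,
    Module.finrank_fintype_fun_eq_card, Fintype.card_subtype]

end Involution

lemma negt_involutive (k : ℕ) : Function.Involutive (negt (k := k)) := fun r => by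
  funext i; simp [negt]

lemma wt_add_wt_negt {k : ℕ} (r : Fin k → Bool) : wt r + wt (negt r) = k := by
  simpa [wt, negt] using card_filter_add_card_filter_not (s := univ) (p := fun i => r i = true)

lemma sub_two_mul_wt_negt {k : ℕ} (r : Fin k → Bool) :
    (k : ℤ) - 2 * (wt (negt r) : ℤ) = -((k : ℤ) - 2 * (wt r : ℤ)) := by
  have := wt_add_wt_negt r
  omega

lemma card_filter_wt_eq (k b : ℕ) : #{r : Fin k → Bool | wt r = b} = k.choose b := by
  have hchoose := card_powersetCard b (univ : Finset (Fin k))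
  rw [card_univ, Fintype.card_fin] at hchoose
  rw [← hchoose]
  refine card_bij' (fun r _ => ({i | r i = true} : Finset (Fin k))) (fun s _ i => decide (i ∈ s))
    ?_ ?_ ?_ ?_ <;> intro x hx
  all_goals simp only [mem_filter, mem_univ, true_and, mem_powersetCard, subset_univ] at hx ⊢
  · exact hx
  · simpa [wt] using hx
  · funext i
    simp
  · ext i
    simp

lemma card_filter_wt_eq_sum (k : ℕ) (P : ℕ → Prop) [DecidablePred P] :
    #{r : Fin k → Bool | P (wt r)} =
      ∑ b ∈ range (k + 1), if P b then k.choose b else 0 := by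
  have hwt : ∀ r ∈ ({r : Fin k → Bool | P (wt r)} : Finset _), wt r ∈ range (k + 1) :=
    fun r _ => mem_range_succ_iff.mpr (by have := wt_add_wt_negt r; omega)
  rw [card_eq_sum_card_fiberwise hwt]
  refine sum_congr rfl fun b _ => ?_
  rw [filter_filter, ← card_filter_wt_eq]
  split_ifs with hb
  · congr 1
    ext r
    simp only [mem_filter, mem_univ, true_and, and_iff_right_iff_imp]
    exact fun h => h ▸ hb
  · rw [card_eq_zero, filter_eq_empty_iff]
    rintro r - ⟨hr, rfl⟩
    exact hb hr

lemma mem_eigSub_diagonal_iff {I : Type*} [Fintype I] [DecidableEq I] {d : I → ℂ} {c : ℂ}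
    {v : I → ℂ} : v ∈ eigSub (diagonal d) c ↔ ∀ r, d r ≠ c → v r = 0 := by
  change (diagonal d).mulVec v = c • v ↔ _
  simp only [mulVec_diagonal, funext_iff, Pi.smul_apply, smul_eq_mul]
  refine forall_congr' fun r => ?_
  rw [← sub_eq_zero, ← sub_mul, mul_eq_zero, sub_eq_zero, or_iff_not_imp_left]

lemma mem_eigSub_Pmat_iff {k : ℕ} {μ : ℂ} {v : (Fin k → Bool) → ℂ} :
    v ∈ eigSub (Pmat k) μ ↔ ∀ r, v (negt r) = μ * v r := by
  change (Pmat k).mulVec v = μ • v ↔ _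
  rw [funext_iff]
  refine forall_congr' fun r => ?_
  simp [Pmat, mulVec, dotProduct]

lemma sq_mul_I_zpow_eq_one {ε : ℂ} (hε : ε = 1 ∨ ε = -1) {d : ℤ} (hd : Even d) :
    (ε * Complex.I ^ d) ^ 2 = 1 := by
  obtain ⟨m, rfl⟩ := hd
  have hε2 : ε ^ 2 = 1 := by rcases hε with rfl | rfl <;> norm_num
  rw [mul_pow, hε2, one_mul, ← two_mul, _root_.zpow_mul, zpow_two, Complex.I_mul_I,
    ← zpow_natCast, ← _root_.zpow_mul, mul_comm, _root_.zpow_mul]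
  norm_num

/-- For `ℓ ∈ {0, n}` and `ε ∈ {1, −1}`, twice the dimension of the simultaneous
eigenspace `W = {v | D v = ζ^ℓ v, P v = ε·i^(ℓ−k) v}` equals
`Σ_{0 ≤ b ≤ k, k − 2b ≡ ℓ mod 2n} C(k,b)`. -/
theorem stmt9 (k n : ℕ) (hk : 1 ≤ k) (hn : 2 ≤ n) (ζ : ℂ)
    (hζ : IsPrimitiveRoot ζ (2 * n)) (ℓ : ℕ) (hℓ : ℓ = 0 ∨ ℓ = n)
    (ε : ℂ) (hε : ε = 1 ∨ ε = -1) :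
    2 * Module.finrank ℂ
        ↥(eigSub (Dmat k ζ) (ζ ^ ℓ) ⊓
          eigSub (Pmat k) (ε * Complex.I ^ ((ℓ : ℤ) - (k : ℤ)))) =
      ∑ b ∈ Finset.range (k + 1),
        if ((k : ℤ) - 2 * (b : ℤ)) ≡ (ℓ : ℤ) [ZMOD ((2 * n : ℕ) : ℤ)]
          then k.choose b else 0 := by
  classical
  set cong : ℕ → Prop := fun b => (k : ℤ) - 2 * (b : ℤ) ≡ ℓ [ZMOD ((2 * n : ℕ) : ℤ)]
  have h2ℓ : ((2 * n : ℕ) : ℤ) ∣ 2 * ℓ := by rcases hℓ with rfl | rfl <;> simp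
  have hcong : ∀ r : Fin k → Bool, cong (wt (negt r)) ↔ cong (wt r) := fun r => by
    simp only [cong, sub_two_mul_wt_negt, Int.neg_modEq_iff_of_dvd_two_mul h2ℓ]
  have hflip : ∀ r : Fin k → Bool, negt r ⟨0, hk⟩ = false ↔ ¬ r ⟨0, hk⟩ = false := by
    simp [negt]
  have hμ : ∀ r : Fin k → Bool, cong (wt r) →
      (ε * Complex.I ^ ((ℓ : ℤ) - (k : ℤ))) ^ 2 = 1 := fun r hr => by
    have h2 : (2 : ℤ) ∣ ℓ - ((k : ℤ) - 2 * (wt r : ℤ)) :=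
      (Int.ModEq.of_mul_right (n : ℤ) (by simpa [cong] using hr)).dvd
    exact sq_mul_I_zpow_eq_one hε (even_iff_two_dvd.mpr (by omega))
  have hW : ∀ v, v ∈ eigSub (Dmat k ζ) (ζ ^ ℓ) ⊓
      eigSub (Pmat k) (ε * Complex.I ^ ((ℓ : ℤ) - (k : ℤ))) ↔
      (∀ r, ¬ cong (wt r) → v r = 0) ∧
        ∀ r, v (negt r) = ε * Complex.I ^ ((ℓ : ℤ) - (k : ℤ)) * v r := fun v => by
    simp only [Submodule.mem_inf, Dmat, mem_eigSub_diagonal_iff, mem_eigSub_Pmat_iff,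
      ← zpow_natCast ζ ℓ, ne_eq, hζ.zpow_eq_zpow_iff_modEq (by omega), cong]
  rw [finrank_eq_card_filter_and (q := fun r => r ⟨0, hk⟩ = false) (negt_involutive k) hcong
    hflip hμ hW, two_mul_card_filter_and (negt_involutive k) hcong hflip]
  exact card_filter_wt_eq_sum k cong
end
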